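/- arXiv:2112.14090 — 7 statements merged into one kernel-verified Lean document; each statement's English description precedes it below -/
import Mathlib

section
/- Let the assumptions be as in the context, and suppose Φ(z) < Φ(0) for all 0 < z ≤ 1. Then there exists δ₀ > 0 such that for all 0 < δ < δ₀, max_{(α,β)∈[0,1]²} Φ̃_δ(α,β) = Φ̃_δ(0,0) = 1 − d/k − δ. -/
/-!
Write `g(α) = D(1 − K'(α)/k)`. Since `e^{-x} ≤ 1 − x + x²`, for small `δ` the perturbation
satisfies `Φ̃_δ(α,β) − Φ(α) + δ ≤ 4δ(1 − g(α))³`, so it suffices to bound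
`(1 − g(α))³` by a multiple of the gap `Φ(0) − Φ(α)`. Away from `α = 0` the gap is bounded below
by compactness. Near `α = 0`, because `k ≥ 3` we have `K'(α)/k ≤ α²` and `K(α) ≤ (α/3) K'(α)`,
and a second-order expansion of `D` at `1` gives `Φ(0) − Φ(α) ≥ (d/3) α K'(α)/k`, while
`(1 − g(α))³ ≤ (d K'(α)/k)³ ≤ d³ α K'(α)/k`.
-/

open scoped ENNReal

namespace DegreeModel

/-- The probability generating function `E[x^d]` of an integer-valued random
variable with law `ν`. -/
noncomputable def pgf (ν : PMF ℕ) (x : ℝ) : ℝ := ∑' i : ℕ, (ν i).toReal * x ^ i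

/-- The derivative `Σ_i P[d=i]·i·x^{i−1}` of the probability generating function. -/
noncomputable def pgf' (ν : PMF ℕ) (x : ℝ) : ℝ := ∑' i : ℕ, (ν i).toReal * i * x ^ (i - 1)

/-- The mean `E[d]` of an integer-valued random variable with law `ν`. -/
noncomputable def mean (ν : PMF ℕ) : ℝ := ∑' i : ℕ, (ν i).toReal * i

/-- The function `Φ(z) = D(1 − K'(z)/k) − (d/k)(1 − K(z) − (1−z)K'(z))`. -/
noncomputable def Phi (νd νk : PMF ℕ) (z : ℝ) : ℝ :=
  pgf νd (1 - pgf' νk z / mean νk) -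
    (mean νd / mean νk) * (1 - pgf νk z - (1 - z) * pgf' νk z)

/-- The function `Φ̃_δ(α,β) = Φ(α) + (exp(−3δβ²) − 1)·D(1 − K'(α)/k) − δ + 3δβ² − 2δβ³`. -/
noncomputable def PhiTilde (νd νk : PMF ℕ) (δ α β : ℝ) : ℝ :=
  Phi νd νk α + (Real.exp (-(3 * δ * β ^ 2)) - 1) * pgf νd (1 - pgf' νk α / mean νk)
    - δ + 3 * δ * β ^ 2 - 2 * δ * β ^ 3

end DegreeModel

lemma IsCompact.exists_pos_forall_add_le {X : Type*} [TopologicalSpace X] {s : Set X}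
    (hs : IsCompact s) {f : X → ℝ} (hf : ContinuousOn f s) {c : ℝ} (h : ∀ x ∈ s, f x < c) :
    ∃ ε > 0, ∀ x ∈ s, f x + ε ≤ c := by
  rcases s.eq_empty_or_nonempty with rfl | hne
  · exact ⟨1, one_pos, by simp⟩
  obtain ⟨x₀, hx₀, hmax⟩ := hs.exists_isMaxOn hne hf
  exact ⟨c - f x₀, sub_pos.2 (h x₀ hx₀), fun x hx => by linarith [isMaxOn_iff.1 hmax x hx]⟩

lemma Real.exp_neg_le_one_sub_add_sq {x : ℝ} (hx : 0 ≤ x) : Real.exp (-x) ≤ 1 - x + x ^ 2 := by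
  rw [Real.exp_neg, inv_le_iff_one_le_mul₀ (Real.exp_pos x)]
  nlinarith [mul_le_mul_of_nonneg_left (Real.add_one_le_exp x)
    (by nlinarith [sq_nonneg (2 * x - 1)] : (0 : ℝ) ≤ 1 - x + x ^ 2), pow_nonneg hx 3]

lemma exp_neg_sub_one_mul_add_le {δ β g : ℝ} (hδ0 : 0 ≤ δ) (hδ1 : 9 * δ ≤ 1)
    (hβ0 : 0 ≤ β) (hβ1 : β ≤ 1) (hg0 : 0 ≤ g) (hg1 : g ≤ 1) :
    (Real.exp (-(3 * δ * β ^ 2)) - 1) * g + 3 * δ * β ^ 2 - 2 * δ * β ^ 3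
      ≤ 4 * δ * (1 - g) ^ 3 := by
  have hexp : (Real.exp (-(3 * δ * β ^ 2)) - 1) * g
      ≤ ((3 * δ * β ^ 2) ^ 2 - 3 * δ * β ^ 2) * g := by
    refine mul_le_mul_of_nonneg_right ?_ hg0
    linarith [Real.exp_neg_le_one_sub_add_sq (by positivity : 0 ≤ 3 * δ * β ^ 2)]
  have hsq : (3 * δ * β ^ 2) ^ 2 ≤ δ * β ^ 3 := by
    have : 9 * δ * β ≤ 1 := by nlinarith
    nlinarith [mul_nonneg hδ0 (pow_nonneg hβ0 3)]
  -- `4c³ − 3c²β + β³ = (β + c)(β − 2c)²` with `c = 1 − g`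
  have hcubic : 0 ≤ δ * ((β + (1 - g)) * (β - 2 * (1 - g)) ^ 2) := by
    have : 0 ≤ 1 - g := by linarith
    positivity
  nlinarith [mul_le_of_le_one_right (sq_nonneg (3 * δ * β ^ 2)) hg1]

namespace DegreeModel

noncomputable def secondMoment (ν : PMF ℕ) : ℝ := ∑' i : ℕ, (ν i).toReal * (i : ℝ) ^ 2

section PGF

variable {ν : PMF ℕ}

lemma summable_toReal (ν : PMF ℕ) : Summable fun i : ℕ => (ν i).toReal :=
  ENNReal.summable_toReal (by simp [ν.tsum_coe])

lemma tsum_toReal (ν : PMF ℕ) : ∑' i : ℕ, (ν i).toReal = 1 := by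
  rw [← ENNReal.tsum_toReal_eq fun a => ν.apply_ne_top a, ν.tsum_coe, ENNReal.toReal_one]

lemma summable_toReal_mul_sq (hmom : ∑' i : ℕ, (i : ℝ≥0∞) ^ 2 * ν i ≠ ⊤) :
    Summable fun i : ℕ => (ν i).toReal * (i : ℝ) ^ 2 :=
  (ENNReal.summable_toReal hmom).congr fun i => by
    simp [ENNReal.toReal_mul, ENNReal.toReal_pow, mul_comm]

lemma summable_toReal_mul (hmom : ∑' i : ℕ, (i : ℝ≥0∞) ^ 2 * ν i ≠ ⊤) :
    Summable fun i : ℕ => (ν i).toReal * i := by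
  refine (summable_toReal_mul_sq hmom).of_nonneg_of_le (fun i => by positivity) fun i => ?_
  gcongr
  exact_mod_cast Nat.le_self_pow two_ne_zero i

lemma summable_pgf_terms (ν : PMF ℕ) {x : ℝ} (h0 : 0 ≤ x) (h1 : x ≤ 1) :
    Summable fun i : ℕ => (ν i).toReal * x ^ i :=
  (summable_toReal ν).of_nonneg_of_le (fun i => by positivity)
    fun i => mul_le_of_le_one_right ENNReal.toReal_nonneg (pow_le_one₀ h0 h1)

lemma summable_pgf'_terms (hmom : ∑' i : ℕ, (i : ℝ≥0∞) ^ 2 * ν i ≠ ⊤)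
    {x : ℝ} (h0 : 0 ≤ x) (h1 : x ≤ 1) :
    Summable fun i : ℕ => (ν i).toReal * i * x ^ (i - 1) :=
  (summable_toReal_mul hmom).of_nonneg_of_le (fun i => by positivity)
    fun i => mul_le_of_le_one_right (by positivity) (pow_le_one₀ h0 h1)

lemma pgf_nonneg (ν : PMF ℕ) {x : ℝ} (h0 : 0 ≤ x) : 0 ≤ pgf ν x :=
  tsum_nonneg fun i => by positivity

lemma pgf_le_one (ν : PMF ℕ) {x : ℝ} (h0 : 0 ≤ x) (h1 : x ≤ 1) : pgf ν x ≤ 1 := by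
  rw [pgf, ← tsum_toReal ν]
  exact (summable_pgf_terms ν h0 h1).tsum_le_tsum
    (fun i => mul_le_of_le_one_right ENNReal.toReal_nonneg (pow_le_one₀ h0 h1))
    (summable_toReal ν)

lemma pgf_one (ν : PMF ℕ) : pgf ν 1 = 1 := by
  simpa [pgf] using tsum_toReal ν

lemma pgf'_one (ν : PMF ℕ) : pgf' ν 1 = mean ν := by
  simp [pgf', mean]

lemma pgf'_nonneg (ν : PMF ℕ) {x : ℝ} (h0 : 0 ≤ x) : 0 ≤ pgf' ν x :=
  tsum_nonneg fun i => by positivity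

lemma mean_nonneg (ν : PMF ℕ) : 0 ≤ mean ν :=
  tsum_nonneg fun i => by positivity

lemma secondMoment_nonneg (ν : PMF ℕ) : 0 ≤ secondMoment ν :=
  tsum_nonneg fun i => by positivity

lemma pgf_mem_Icc (ν : PMF ℕ) {x : ℝ} (hx : x ∈ Set.Icc 0 1) : pgf ν x ∈ Set.Icc 0 1 :=
  ⟨pgf_nonneg ν hx.1, pgf_le_one ν hx.1 hx.2⟩

lemma pgf'_le_mean (hmom : ∑' i : ℕ, (i : ℝ≥0∞) ^ 2 * ν i ≠ ⊤)
    {x : ℝ} (h0 : 0 ≤ x) (h1 : x ≤ 1) : pgf' ν x ≤ mean ν :=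
  (summable_pgf'_terms hmom h0 h1).tsum_le_tsum
    (fun i => mul_le_of_le_one_right (by positivity) (pow_le_one₀ h0 h1))
    (summable_toReal_mul hmom)

lemma pgf'_div_mean_mem_Icc (hmom : ∑' i : ℕ, (i : ℝ≥0∞) ^ 2 * ν i ≠ ⊤) (hν : 0 < mean ν)
    {x : ℝ} (hx : x ∈ Set.Icc 0 1) : pgf' ν x / mean ν ∈ Set.Icc 0 1 :=
  ⟨div_nonneg (pgf'_nonneg ν hx.1) hν.le, div_le_one_of_le₀ (pgf'_le_mean hmom hx.1 hx.2) hν.le⟩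

lemma hasSum_one_sub_pgf_one_sub (ν : PMF ℕ) {t : ℝ} (ht0 : 0 ≤ t) (ht1 : t ≤ 1) :
    HasSum (fun i : ℕ => (ν i).toReal * (1 - (1 - t) ^ i)) (1 - pgf ν (1 - t)) := by
  have := (summable_toReal ν).hasSum.sub
    (summable_pgf_terms ν (x := 1 - t) (by linarith) (by linarith)).hasSum
  rw [tsum_toReal, ← pgf] at this
  simpa only [mul_sub, mul_one] using this

lemma one_sub_pgf_one_sub_le (hmom : ∑' i : ℕ, (i : ℝ≥0∞) ^ 2 * ν i ≠ ⊤)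
    {t : ℝ} (ht0 : 0 ≤ t) (ht1 : t ≤ 1) : 1 - pgf ν (1 - t) ≤ mean ν * t := by
  refine hasSum_le (fun i => ?_) (hasSum_one_sub_pgf_one_sub ν ht0 ht1)
    ((summable_toReal_mul hmom).hasSum.mul_right t)
  have := one_add_mul_le_pow (by linarith : (-2 : ℝ) ≤ -t) i
  simp only [mul_neg, ← sub_eq_add_neg] at this
  rw [mul_assoc]
  exact mul_le_mul_of_nonneg_left (by linarith) ENNReal.toReal_nonneg

lemma pow_one_sub_le (n : ℕ) {t : ℝ} (ht0 : 0 ≤ t) (ht1 : t ≤ 1) :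
    (1 - t) ^ n ≤ 1 - n * t + (n : ℝ) ^ 2 * t ^ 2 / 2 := by
  induction n with
  | zero => norm_num
  | succ n ih =>
    have := mul_le_mul_of_nonneg_right ih (by linarith : (0 : ℝ) ≤ 1 - t)
    rw [pow_succ]
    push_cast
    nlinarith [mul_nonneg (sq_nonneg (n : ℝ)) (pow_nonneg ht0 3), sq_nonneg t]

lemma mean_mul_sub_le_one_sub_pgf_one_sub (hmom : ∑' i : ℕ, (i : ℝ≥0∞) ^ 2 * ν i ≠ ⊤)
    {t : ℝ} (ht0 : 0 ≤ t) (ht1 : t ≤ 1) :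
    mean ν * t - secondMoment ν * t ^ 2 / 2 ≤ 1 - pgf ν (1 - t) := by
  refine hasSum_le (fun i => ?_)
    (((summable_toReal_mul hmom).hasSum.mul_right t).sub
      ((summable_toReal_mul_sq hmom).hasSum.mul_right (t ^ 2 / 2)))
    (hasSum_one_sub_pgf_one_sub ν ht0 ht1) |>.trans_eq' (by rw [mean, secondMoment]; ring)
  have := mul_le_mul_of_nonneg_left (pow_one_sub_le i ht0 ht1) (ENNReal.toReal_nonneg (a := ν i))
  linarith

lemma continuousOn_pgf (ν : PMF ℕ) : ContinuousOn (pgf ν) (Set.Icc 0 1) := by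
  refine continuousOn_tsum (fun i => (continuous_const.mul (continuous_pow i)).continuousOn)
    (summable_toReal ν) fun i x hx => ?_
  rw [Real.norm_eq_abs, abs_mul, abs_of_nonneg ENNReal.toReal_nonneg, abs_pow,
    abs_of_nonneg hx.1]
  exact mul_le_of_le_one_right ENNReal.toReal_nonneg (pow_le_one₀ hx.1 hx.2)

lemma continuousOn_pgf' (hmom : ∑' i : ℕ, (i : ℝ≥0∞) ^ 2 * ν i ≠ ⊤) :
    ContinuousOn (pgf' ν) (Set.Icc 0 1) := by
  refine continuousOn_tsum (fun i => (continuous_const.mul (continuous_pow _)).continuousOn)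
    (summable_toReal_mul hmom) fun i x hx => ?_
  rw [Real.norm_eq_abs, abs_of_nonneg (by have := hx.1; positivity)]
  exact mul_le_of_le_one_right (by positivity) (pow_le_one₀ hx.1 hx.2)

end PGF

section Support

variable {ν : PMF ℕ} {m : ℕ}

lemma toReal_apply_eq_zero_of_notMem {i : ℕ} (hi : i ∉ ν.support) : (ν i).toReal = 0 := by
  rw [(ν.apply_eq_zero_iff i).2 hi, ENNReal.toReal_zero]

lemma pgf_zero (hν : ∀ i ∈ ν.support, 1 ≤ i) : pgf ν 0 = 0 := by
  refine (tsum_congr fun i => ?_).trans tsum_zero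
  by_cases hi : i ∈ ν.support
  · simp [zero_pow (by have := hν i hi; omega : i ≠ 0)]
  · simp [toReal_apply_eq_zero_of_notMem hi]

lemma pgf'_zero (hν : ∀ i ∈ ν.support, 2 ≤ i) : pgf' ν 0 = 0 := by
  refine (tsum_congr fun i => ?_).trans tsum_zero
  by_cases hi : i ∈ ν.support
  · simp [zero_pow (by have := hν i hi; omega : i - 1 ≠ 0)]
  · simp [toReal_apply_eq_zero_of_notMem hi]

lemma le_mean (hmom : ∑' i : ℕ, (i : ℝ≥0∞) ^ 2 * ν i ≠ ⊤) (hν : ∀ i ∈ ν.support, m ≤ i) :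
    (m : ℝ) ≤ mean ν := by
  calc (m : ℝ) = ∑' i : ℕ, (ν i).toReal * m := by rw [tsum_mul_right, tsum_toReal, one_mul]
    _ ≤ mean ν := by
      refine ((summable_toReal ν).mul_right _).tsum_le_tsum (fun i => ?_)
        (summable_toReal_mul hmom)
      by_cases hi : i ∈ ν.support
      · exact mul_le_mul_of_nonneg_left (by exact_mod_cast hν i hi) ENNReal.toReal_nonneg
      · simp [toReal_apply_eq_zero_of_notMem hi]

lemma mean_pos (hmom : ∑' i : ℕ, (i : ℝ≥0∞) ^ 2 * ν i ≠ ⊤) (hm : 0 < m)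
    (hν : ∀ i ∈ ν.support, m ≤ i) : 0 < mean ν :=
  (Nat.cast_pos.2 hm).trans_le (le_mean hmom hν)

lemma pgf'_le_mean_mul_pow (hmom : ∑' i : ℕ, (i : ℝ≥0∞) ^ 2 * ν i ≠ ⊤)
    (hν : ∀ i ∈ ν.support, m ≤ i) {x : ℝ} (h0 : 0 ≤ x) (h1 : x ≤ 1) :
    pgf' ν x ≤ mean ν * x ^ (m - 1) := by
  rw [pgf', mean, ← tsum_mul_right]
  refine (summable_pgf'_terms hmom h0 h1).tsum_le_tsum (fun i => ?_)
    ((summable_toReal_mul hmom).mul_right _)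
  by_cases hi : i ∈ ν.support
  · exact mul_le_mul_of_nonneg_left
      (pow_le_pow_of_le_one h0 h1 (by have := hν i hi; omega)) (by positivity)
  · simp [toReal_apply_eq_zero_of_notMem hi]

lemma pgf'_div_mean_le_pow (hmom : ∑' i : ℕ, (i : ℝ≥0∞) ^ 2 * ν i ≠ ⊤) (hm : 0 < m)
    (hν : ∀ i ∈ ν.support, m ≤ i) {x : ℝ} (h0 : 0 ≤ x) (h1 : x ≤ 1) :
    pgf' ν x / mean ν ≤ x ^ (m - 1) := by
  rw [div_le_iff₀ (mean_pos hmom hm hν), mul_comm]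
  exact pgf'_le_mean_mul_pow hmom hν h0 h1

lemma mul_pgf_le_mul_pgf' (hmom : ∑' i : ℕ, (i : ℝ≥0∞) ^ 2 * ν i ≠ ⊤)
    (hν : ∀ i ∈ ν.support, m ≤ i) {x : ℝ} (h0 : 0 ≤ x) (h1 : x ≤ 1) :
    m * pgf ν x ≤ x * pgf' ν x := by
  rw [pgf, pgf', ← tsum_mul_left, ← tsum_mul_left]
  refine ((summable_pgf_terms ν h0 h1).mul_left _).tsum_le_tsum (fun i => ?_)
    ((summable_pgf'_terms hmom h0 h1).mul_left _)
  by_cases hi : i ∈ ν.support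
  · rcases Nat.eq_zero_or_pos i with rfl | hpos
    · have : m = 0 := by have := hν 0 hi; omega
      simp [this]
    · have hx : x ^ i = x * x ^ (i - 1) := by rw [← pow_succ']; congr 1; omega
      have hmi : (m : ℝ) ≤ i := by exact_mod_cast hν i hi
      rw [hx]
      have : 0 ≤ (ν i).toReal * x * x ^ (i - 1) := by positivity
      nlinarith
  · simp [toReal_apply_eq_zero_of_notMem hi]

end Support

section Phi

variable {νd νk : PMF ℕ}

lemma Phi_zero (hk : ∀ i ∈ νk.support, 2 ≤ i) : Phi νd νk 0 = 1 - mean νd / mean νk := by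
  rw [Phi, pgf_zero fun i hi => (hk i hi).trans' one_le_two, pgf'_zero hk]
  simp [pgf_one]

lemma Phi_one (hk : mean νk ≠ 0) : Phi νd νk 1 = pgf νd 0 := by
  simp [Phi, pgf_one, pgf'_one, hk]

lemma mean_pos_of_Phi_one_lt (hmomd : ∑' i : ℕ, (i : ℝ≥0∞) ^ 2 * νd i ≠ ⊤)
    (hmomk : ∑' i : ℕ, (i : ℝ≥0∞) ^ 2 * νk i ≠ ⊤) (hk : ∀ i ∈ νk.support, 2 ≤ i)
    (h : Phi νd νk 1 < Phi νd νk 0) : 0 < mean νd := by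
  have hk0 : (0 : ℝ) < mean νk := mean_pos hmomk two_pos hk
  rw [Phi_one hk0.ne', Phi_zero hk] at h
  have hmarkov := one_sub_pgf_one_sub_le hmomd zero_le_one le_rfl
  rw [sub_self, mul_one] at hmarkov
  rcases (mean_nonneg νd).lt_or_eq with hd | hd
  · exact hd
  · rw [← hd, zero_div] at h
    linarith

lemma continuousOn_Phi (hmomk : ∑' i : ℕ, (i : ℝ≥0∞) ^ 2 * νk i ≠ ⊤) (hk : 0 < mean νk) :
    ContinuousOn (Phi νd νk) (Set.Icc 0 1) :=
  ((continuousOn_pgf νd).comp (continuousOn_const.sub ((continuousOn_pgf' hmomk).div_const _))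
    fun _ hz => Set.Icc.mem_iff_one_sub_mem.1 (pgf'_div_mean_mem_Icc hmomk hk hz)).sub
    (continuousOn_const.mul ((continuousOn_const.sub (continuousOn_pgf νk)).sub
      ((continuousOn_const.sub continuousOn_id).mul (continuousOn_pgf' hmomk))))

lemma mean_div_three_mul_le_Phi_zero_sub (hmomd : ∑' i : ℕ, (i : ℝ≥0∞) ^ 2 * νd i ≠ ⊤)
    (hmomk : ∑' i : ℕ, (i : ℝ≥0∞) ^ 2 * νk i ≠ ⊤) (hk : ∀ i ∈ νk.support, 3 ≤ i)
    {α : ℝ} (hα0 : 0 ≤ α) (hα1 : α ≤ 1) (hα : 3 * secondMoment νd * α ≤ 2 * mean νd) :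
    mean νd / 3 * (α * (pgf' νk α / mean νk)) ≤ Phi νd νk 0 - Phi νd νk α := by
  have hk2 : ∀ i ∈ νk.support, 2 ≤ i := fun i hi => (hk i hi).trans' (by norm_num)
  have hkpos : (0 : ℝ) < mean νk := mean_pos hmomk three_pos hk
  set t := pgf' νk α / mean νk with ht
  set s := pgf νk α / mean νk with hs
  have htα : t ≤ α ^ 2 := pgf'_div_mean_le_pow hmomk three_pos hk hα0 hα1
  obtain ⟨ht0, ht1⟩ := pgf'_div_mean_mem_Icc hmomk hkpos ⟨hα0, hα1⟩
  have hst : 3 * s ≤ α * t := by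
    have := mul_pgf_le_mul_pgf' hmomk hk hα0 hα1
    push_cast at this
    rw [hs, ht, ← mul_div_assoc, ← mul_div_assoc]
    exact div_le_div_of_nonneg_right this hkpos.le
  have hgap : Phi νd νk 0 - Phi νd νk α
      = (1 - pgf νd (1 - t)) - mean νd * (s + (1 - α) * t) := by
    rw [Phi_zero hk2, Phi, ht, hs]
    ring
  have hd := mean_nonneg νd
  have hM := secondMoment_nonneg νd
  have hlow := mean_mul_sub_le_one_sub_pgf_one_sub hmomd ht0 ht1
  have hquad : secondMoment νd * t ^ 2 ≤ 2 * mean νd / 3 * (α * t) := by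
    calc secondMoment νd * t ^ 2 ≤ secondMoment νd * (α ^ 2 * t) := by
          rw [sq t]; gcongr
      _ = (3 * secondMoment νd * α) / 3 * (α * t) := by ring
      _ ≤ 2 * mean νd / 3 * (α * t) := by gcongr
  nlinarith [mul_le_mul_of_nonneg_left hst hd]

lemma one_sub_pgf_cube_le (hmomd : ∑' i : ℕ, (i : ℝ≥0∞) ^ 2 * νd i ≠ ⊤)
    (hmomk : ∑' i : ℕ, (i : ℝ≥0∞) ^ 2 * νk i ≠ ⊤) (hk : ∀ i ∈ νk.support, 3 ≤ i)
    {α : ℝ} (hα0 : 0 ≤ α) (hα1 : α ≤ 1) :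
    (1 - pgf νd (1 - pgf' νk α / mean νk)) ^ 3
      ≤ mean νd ^ 3 * (α * (pgf' νk α / mean νk)) := by
  have hkpos : (0 : ℝ) < mean νk := mean_pos hmomk three_pos hk
  set t := pgf' νk α / mean νk
  have htα : t ≤ α ^ 2 := pgf'_div_mean_le_pow hmomk three_pos hk hα0 hα1
  obtain ⟨ht0, ht1⟩ := pgf'_div_mean_mem_Icc hmomk hkpos ⟨hα0, hα1⟩
  have ht3 : t ^ 3 ≤ α * t := by
    have : t ^ 2 ≤ α := by nlinarith [pow_le_pow_left₀ ht0 htα 2, pow_le_one₀ hα0 hα1 (n := 3)]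
    nlinarith
  calc (1 - pgf νd (1 - t)) ^ 3 ≤ (mean νd * t) ^ 3 := by
        gcongr
        · linarith [pgf_le_one νd (x := 1 - t) (by linarith) (by linarith)]
        · exact one_sub_pgf_one_sub_le hmomd ht0 ht1
    _ = mean νd ^ 3 * t ^ 3 := by ring
    _ ≤ mean νd ^ 3 * (α * t) := by gcongr; exact pow_nonneg (mean_nonneg νd) 3

lemma exists_pos_mul_cube_le_Phi_zero_sub (hmomd : ∑' i : ℕ, (i : ℝ≥0∞) ^ 2 * νd i ≠ ⊤)
    (hmomk : ∑' i : ℕ, (i : ℝ≥0∞) ^ 2 * νk i ≠ ⊤) (hk : ∀ i ∈ νk.support, 3 ≤ i)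
    (hstar : ∀ z : ℝ, 0 < z → z ≤ 1 → Phi νd νk z < Phi νd νk 0) :
    ∃ c > 0, ∀ α ∈ Set.Icc (0 : ℝ) 1,
      c * (1 - pgf νd (1 - pgf' νk α / mean νk)) ^ 3 ≤ Phi νd νk 0 - Phi νd νk α := by
  have hk2 : ∀ i ∈ νk.support, 2 ≤ i := fun i hi => (hk i hi).trans' (by norm_num)
  have hkpos : (0 : ℝ) < mean νk := mean_pos hmomk three_pos hk
  have hd : 0 < mean νd := mean_pos_of_Phi_one_lt hmomd hmomk hk2 (hstar 1 one_pos le_rfl)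
  have hM := secondMoment_nonneg νd
  set α₁ := min 1 (2 * mean νd / (3 * (secondMoment νd + 1)))
  have hα₁ : 0 < α₁ := lt_min one_pos (by positivity)
  obtain ⟨ε, hε, hfar⟩ := (isCompact_Icc (a := α₁) (b := 1)).exists_pos_forall_add_le
    ((continuousOn_Phi hmomk hkpos).mono (Set.Icc_subset_Icc hα₁.le le_rfl))
    fun α hα => hstar α (hα₁.trans_le hα.1) hα.2
  refine ⟨min ε (1 / (3 * mean νd ^ 2)), by positivity, fun α ⟨hα0, hα1⟩ => ?_⟩
  obtain ⟨hg0, hg1⟩ := pgf_mem_Icc νd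
    (Set.Icc.mem_iff_one_sub_mem.1 (pgf'_div_mean_mem_Icc hmomk hkpos ⟨hα0, hα1⟩))
  have hu : 0 ≤ (1 - pgf νd (1 - pgf' νk α / mean νk)) ^ 3 := pow_nonneg (by linarith) 3
  rcases le_or_gt α α₁ with hnear | hα
  · have hα' : 3 * secondMoment νd * α ≤ 2 * mean νd := by
      have := (le_div_iff₀ (by positivity)).1 (hnear.trans (min_le_right _ _))
      nlinarith
    calc _ ≤ 1 / (3 * mean νd ^ 2) * (1 - pgf νd (1 - pgf' νk α / mean νk)) ^ 3 := by
          gcongr; exact min_le_right _ _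
      _ ≤ 1 / (3 * mean νd ^ 2) * (mean νd ^ 3 * (α * (pgf' νk α / mean νk))) := by
          gcongr; exact one_sub_pgf_cube_le hmomd hmomk hk hα0 hα1
      _ = mean νd / 3 * (α * (pgf' νk α / mean νk)) := by field_simp
      _ ≤ Phi νd νk 0 - Phi νd νk α := mean_div_three_mul_le_Phi_zero_sub hmomd hmomk hk hα0 hα1 hα'
  · have hu1 : (1 - pgf νd (1 - pgf' νk α / mean νk)) ^ 3 ≤ 1 :=
      pow_le_one₀ (by linarith) (by linarith)
    nlinarith [hfar α ⟨hα.le, hα1⟩, min_le_left ε (1 / (3 * mean νd ^ 2))]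

lemma PhiTilde_zero_zero (hk : ∀ i ∈ νk.support, 2 ≤ i) (δ : ℝ) :
    PhiTilde νd νk δ 0 0 = 1 - mean νd / mean νk - δ := by
  simp [PhiTilde, Phi_zero hk]

end Phi

end DegreeModel

open DegreeModel

/-- Let `d ≥ 0` and `k ≥ 3` be integer-valued random variables
with `E[d²] + E[k²] < ∞`, and suppose `Φ(z) < Φ(0)` for all `0 < z ≤ 1`.  Then
there exists `δ₀ > 0` such that for all `0 < δ < δ₀`,
`max_{(α,β)∈[0,1]²} Φ̃_δ(α,β) = Φ̃_δ(0,0) = 1 − d/k − δ`. -/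
theorem stmt6 (νd νk : PMF ℕ)
    (hmomd : ∑' i : ℕ, (i : ℝ≥0∞) ^ 2 * νd i ≠ ⊤)
    (hmomk : ∑' i : ℕ, (i : ℝ≥0∞) ^ 2 * νk i ≠ ⊤)
    (hk3 : ∀ i ∈ νk.support, 3 ≤ i)
    (hstar : ∀ z : ℝ, 0 < z → z ≤ 1 → Phi νd νk z < Phi νd νk 0) :
    ∃ δ₀ : ℝ, 0 < δ₀ ∧ ∀ δ : ℝ, 0 < δ → δ < δ₀ →
      (∀ α ∈ Set.Icc (0 : ℝ) 1, ∀ β ∈ Set.Icc (0 : ℝ) 1,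
        PhiTilde νd νk δ α β ≤ PhiTilde νd νk δ 0 0) ∧
      PhiTilde νd νk δ 0 0 = 1 - mean νd / mean νk - δ := by
  have hk2 : ∀ i ∈ νk.support, 2 ≤ i := fun i hi => (hk3 i hi).trans' (by norm_num)
  have hkpos : (0 : ℝ) < mean νk := mean_pos hmomk three_pos hk3
  obtain ⟨c, hc, hgap⟩ := exists_pos_mul_cube_le_Phi_zero_sub hmomd hmomk hk3 hstar
  refine ⟨min (1 / 9) (c / 4), by positivity, fun δ hδ hδ₀ =>
    ⟨fun α hα β hβ => ?_, PhiTilde_zero_zero hk2 δ⟩⟩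
  have hδ9 : 9 * δ ≤ 1 := by linarith [min_le_left (1 / 9 : ℝ) (c / 4)]
  have hδc : 4 * δ ≤ c := by linarith [min_le_right (1 / 9 : ℝ) (c / 4)]
  obtain ⟨hg0, hg1⟩ := pgf_mem_Icc νd
    (Set.Icc.mem_iff_one_sub_mem.1 (pgf'_div_mean_mem_Icc hmomk hkpos hα))
  have hpert := exp_neg_sub_one_mul_add_le hδ.le hδ9 hβ.1 hβ.2 hg0 hg1
  have hcube := mul_le_mul_of_nonneg_right hδc (pow_nonneg (sub_nonneg.2 hg1) 3)
  rw [PhiTilde_zero_zero hk2, ← Phi_zero hk2, PhiTilde]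
  linarith [hgap α hα]
end

section
/- Let the assumptions be as in the context and let δ > 0. If (α,β) ∈ (0,1)² satisfies 1 − β = exp(−3δβ²)·D(1 − K'(α)/k), then Φ̃_δ(α,β) ≤ Φ(α) − δ + δβ³. -/
open scoped ENNReal

open DegreeModel

open Real

lemma exp_neg_sub_one_mul_le_of_eq {x β E : ℝ} (hβ : β ≤ 1) (hfix : 1 - β = exp (-x) * E) :
    (exp (-x) - 1) * E ≤ -(x * (1 - β)) := by
  have hE : E = (1 - β) * exp x := by
    rw [hfix, mul_comm (exp (-x)), mul_assoc, ← exp_add, neg_add_cancel, exp_zero, mul_one]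
  calc (exp (-x) - 1) * E = (1 - β) * (1 - exp x) := by
        rw [hE, exp_neg]
        field_simp
    _ ≤ (1 - β) * -x :=
        mul_le_mul_of_nonneg_left (by linarith [add_one_le_exp x]) (by linarith)
    _ = -(x * (1 - β)) := by ring

theorem stmt9_general (νd νk : PMF ℕ)
    (δ : ℝ) (α β : ℝ)
    (hβ : β ∈ Set.Ioo (0 : ℝ) 1)
    (hfix : 1 - β = Real.exp (-(3 * δ * β ^ 2)) * pgf νd (1 - pgf' νk α / mean νk)) :
    PhiTilde νd νk δ α β ≤ Phi νd νk α - δ + δ * β ^ 3 := by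
  have hbound := exp_neg_sub_one_mul_le_of_eq hβ.2.le hfix
  unfold PhiTilde
  linarith

/-- Let `d ≥ 0` and `k ≥ 3` be integer-valued random variables
with `E[d²] + E[k²] < ∞` and let `δ > 0`.  If `(α,β) ∈ (0,1)²` satisfies
`1 − β = exp(−3δβ²)·D(1 − K'(α)/k)`, then `Φ̃_δ(α,β) ≤ Φ(α) − δ + δβ³`. -/
theorem stmt9 (νd νk : PMF ℕ)
    (hmomd : ∑' i : ℕ, (i : ℝ≥0∞) ^ 2 * νd i ≠ ⊤)
    (hmomk : ∑' i : ℕ, (i : ℝ≥0∞) ^ 2 * νk i ≠ ⊤)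
    (hk3 : ∀ i ∈ νk.support, 3 ≤ i)
    (δ : ℝ) (hδ : 0 < δ) (α β : ℝ)
    (hα : α ∈ Set.Ioo (0 : ℝ) 1) (hβ : β ∈ Set.Ioo (0 : ℝ) 1)
    (hfix : 1 - β = Real.exp (-(3 * δ * β ^ 2)) * pgf νd (1 - pgf' νk α / mean νk)) :
    PhiTilde νd νk δ α β ≤ Phi νd νk α - δ + δ * β ^ 3 :=
  stmt9_general νd νk δ α β hβ hfix
end

section
/- For any prime power q and any χ ∈ 𝔽_q*, the ℤ-module 𝔐_q(χ,χ,χ) possesses a ℤ-basis 𝔟₁,…,𝔟_{q−1} of vectors with non-negative integer entries such that for every 1 ≤ i ≤ q−1 one has ‖𝔟_i‖₁ ≤ 3 and Σ_{s∈𝔽_q*} 𝔟_{i,s}·s = 0 in 𝔽_q, and the (q−1)×(q−1) matrix with columns 𝔟₁,…,𝔟_{q−1} has determinant of absolute value q. Furthermore, for every integer k₀ > 3, 𝔐_q(χ,…,χ) with k₀ coefficients equals 𝔐_q(χ,χ,χ). -/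
namespace FreqModule

variable (F : Type) [Field F] [Fintype F] [DecidableEq F]

/-- The frequency vector `σ̂ ∈ ℤ^{𝔽_q*}` of an assignment `σ ∈ 𝔽_q^{k₀}`:
`σ̂_s = |{i : σ_i = s}|` for `s ∈ 𝔽_q* = 𝔽_q ∖ {0}`. -/
def freq (k₀ : ℕ) (σ : Fin k₀ → F) : {x : F // x ≠ 0} → ℤ :=
  fun s => ((Finset.univ.filter fun i => σ i = (s : F)).card : ℤ)

/-- The solution set `S_q(χ₁,…,χ_{k₀}) = {σ ∈ 𝔽_q^{k₀} : Σ χ_i σ_i = 0}`. -/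
def solSet (k₀ : ℕ) (χ : Fin k₀ → {x : F // x ≠ 0}) : Set (Fin k₀ → F) :=
  {σ | ∑ i, (χ i : F) * σ i = 0}

/-- The ℤ-module `𝔐_q(χ₁,…,χ_{k₀}) ⊆ ℤ^{𝔽_q*}` generated by the frequency
vectors of the solutions of the linear equation `Σ χ_i σ_i = 0`. -/
def freqModule (k₀ : ℕ) (χ : Fin k₀ → {x : F // x ≠ 0}) :
    Submodule ℤ ({x : F // x ≠ 0} → ℤ) :=
  Submodule.span ℤ (freq F k₀ '' solSet F k₀ χ)

end FreqModule

open FreqModule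

/-!
Let `φ : ℤ^{𝔽_q*} → 𝔽_q` send `v` to `Σ v_s s`. Frequency vectors of solutions lie in `ker φ`,
and for `k₀ ≥ 3` every `δ_x + δ_y + δ_z` with `x + y + z = 0` is such a frequency vector, so it
suffices to find `q - 1` of these triples spanning `ker φ`. Identify `𝔽_q` with `(ℤ/p)ⁿ` and
pick, for each `s ≠ 0` with leading term `a e_j`, the triple `(s, a e_j - s, -a e_j)` unless `s`
lies on the line `ℤ/p · e_j`, where the triples give `[-c e_j] = -[c e_j]` and
`[(c + 1) e_j] = [c e_j] + [e_j]`. Modulo their span the class of `δ_x` is then additive in `x`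
(induction on the support of `x`), so the span is exactly `ker φ`. As `ker φ` has index `q`,
the triples form a basis and their determinant is `±q`.
-/

open Submodule

theorem ZMod.lt_two_mul_val_add_one_or_neg {p : ℕ} [NeZero p] {k : ZMod p} (hk : k ≠ 0)
    (hk' : k + 1 ≠ 0) : p < 2 * (k + 1).val ∨ p < 2 * (-k).val := by
  have hcast : k + 1 = ((k.val + 1 : ℕ) : ZMod p) := by push_cast; rw [ZMod.natCast_zmod_val]
  have hlt : k.val + 1 < p := by
    refine lt_of_le_of_ne (ZMod.val_lt k) fun h ↦ hk' ?_
    rw [hcast, h, ZMod.natCast_self]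
  have h1 : (k + 1).val = k.val + 1 := by rw [hcast, ZMod.val_natCast_of_lt hlt]
  have h2 : (-k).val = p - k.val := by rw [ZMod.neg_val, if_neg hk]
  have h3 : k.val ≠ 0 := (ZMod.val_ne_zero k).2 hk
  omega

theorem ZMod.map_add_of_map_add_one {p : ℕ} [NeZero p] {A : Type*} [AddCommGroup A]
    {g : ZMod p → A} (h : ∀ k, g (k + 1) = g k + g 1) (a c : ZMod p) :
    g (a + c) = g a + g c := by
  have h0 : g 0 = 0 := by simpa using h 0
  rw [← ZMod.natCast_zmod_val c]
  induction c.val with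
  | zero => simp [h0]
  | succ m ih => rw [Nat.cast_succ, ← add_assoc, h, ih, h, add_assoc]

section Lattice

variable {ι : Type*} [Fintype ι] {N : Submodule ℤ (ι → ℤ)} [N.toAddSubgroup.FiniteIndex]
  {v : ι → ι → ℤ}

theorem linearIndependent_of_span_eq_of_finiteIndex (hv : span ℤ (Set.range v) = N) :
    LinearIndependent ℤ v := by
  rw [linearIndependent_iff_card_eq_finrank_span, Set.finrank, hv]
  exact ((AddSubgroup.finrank_eq_of_finiteIndex N.toAddSubgroup).trans
    (Module.finrank_fintype_fun_eq_card ℤ)).symm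

theorem natAbs_det_of_span_eq_of_finiteIndex [DecidableEq ι] (hv : span ℤ (Set.range v) = N) :
    (Matrix.of fun i j ↦ v j i).det.natAbs = Nat.card ((ι → ℤ) ⧸ N) := by
  let bN : Module.Basis ι ℤ N :=
    (Module.Basis.span (linearIndependent_of_span_eq_of_finiteIndex hv)).map
      (LinearEquiv.ofEq _ _ hv)
  rw [← Submodule.natAbs_det_basis_change (Pi.basisFun ℤ ι) N bN, Pi.basisFun_det_apply,
    ← Matrix.det_transpose]
  congr 2
  ext i j
  simp [bN, Module.Basis.span_apply]

end Lattice

namespace FreqModule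

section Triples

variable {V : Type*} [AddCommGroup V] [DecidableEq V]

def dirac (x : V) : {y : V // y ≠ 0} → ℤ := fun s ↦ if x = s then 1 else 0

def triple (x y z : V) : {y : V // y ≠ 0} → ℤ := dirac x + dirac y + dirac z

@[simp] theorem dirac_zero : dirac (0 : V) = 0 := by
  ext s
  simp [dirac, Ne.symm s.2]

theorem dirac_coe (s : {y : V // y ≠ 0}) : dirac (s : V) = Pi.single s 1 := by
  ext t
  simp [dirac, Pi.single_apply, Subtype.ext_iff, eq_comm]

theorem dirac_nonneg (x : V) (s : {y : V // y ≠ 0}) : 0 ≤ dirac x s := by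
  unfold dirac; positivity

theorem sum_dirac_le_one [Fintype V] (x : V) : ∑ s, dirac x s ≤ 1 := by
  by_cases hx : x = 0
  · simp [hx]
  · simp [dirac_coe (⟨x, hx⟩ : {y : V // y ≠ 0})]

theorem triple_nonneg (x y z : V) (s : {y : V // y ≠ 0}) : 0 ≤ triple x y z s :=
  add_nonneg (add_nonneg (dirac_nonneg x s) (dirac_nonneg y s)) (dirac_nonneg z s)

theorem sum_natAbs_triple_le [Fintype V] (x y z : V) : ∑ s, (triple x y z s).natAbs ≤ 3 := by
  zify
  simp only [fun s ↦ abs_of_nonneg (triple_nonneg x y z s)]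
  simp only [triple, Pi.add_apply, Finset.sum_add_distrib]
  linarith [sum_dirac_le_one x, sum_dirac_le_one y, sum_dirac_le_one z]

variable (V) in
def weightedSum [Fintype V] : ({y : V // y ≠ 0} → ℤ) →ₗ[ℤ] V :=
  Fintype.linearCombination ℤ Subtype.val

variable [Fintype V]

theorem weightedSum_apply (v : {y : V // y ≠ 0} → ℤ) : weightedSum V v = ∑ s, v s • (s : V) :=
  Fintype.linearCombination_apply ℤ _ v

@[simp] theorem weightedSum_dirac (x : V) : weightedSum V (dirac x) = x := by
  by_cases hx : x = 0
  · simp [hx]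
  · simp [dirac_coe (⟨x, hx⟩ : {y : V // y ≠ 0}), weightedSum]

theorem weightedSum_triple (x y z : V) : weightedSum V (triple x y z) = x + y + z := by
  simp [triple]

theorem weightedSum_surjective : Function.Surjective (weightedSum V) :=
  fun x ↦ ⟨dirac x, weightedSum_dirac x⟩

theorem card_quotient_ker_weightedSum :
    Nat.card (({y : V // y ≠ 0} → ℤ) ⧸ LinearMap.ker (weightedSum V)) = Fintype.card V := by
  rw [Nat.card_congr (LinearMap.quotKerEquivOfSurjective _ weightedSum_surjective).toEquiv,
    Nat.card_eq_fintype_card]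

instance : (LinearMap.ker (weightedSum V)).toAddSubgroup.FiniteIndex :=
  ⟨by
    change Nat.card (_ ⧸ LinearMap.ker (weightedSum V)) ≠ 0
    rw [card_quotient_ker_weightedSum]
    exact Fintype.card_ne_zero⟩

end Triples

noncomputable section ElementaryAbelian

variable {p : ℕ} {V : Type*} [AddCommGroup V] [Module (ZMod p) V] {ι : Type*}
  (b : Module.Basis ι (ZMod p) V)

theorem smul_basis_ne_zero {c : ZMod p} (hc : c ≠ 0) (j : ι) : c • b j ≠ 0 := by
  rw [← zero_smul (ZMod p) (b j)]
  exact fun h ↦ hc (b.linearIndependent.smul_left_injective j h)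

variable [LinearOrder ι]

def pivot (s : {x : V // x ≠ 0}) : ι :=
  (b.repr s).support.min' (by simpa using s.2)

def leadCoeff (s : {x : V // x ≠ 0}) : ZMod p := b.repr s (pivot b s)

def leadTerm (s : {x : V // x ≠ 0}) : V := leadCoeff b s • b (pivot b s)

theorem card_support_repr_leadTerm_sub_lt (s : {x : V // x ≠ 0}) :
    (b.repr (leadTerm b s - s)).support.card < (b.repr s).support.card := by
  have h : b.repr (leadTerm b s - s) = -(b.repr s).erase (pivot b s) := by
    simp [leadTerm, leadCoeff, Finsupp.erase_eq_sub_single]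
  rw [h, Finsupp.support_neg, Finsupp.support_erase]
  exact Finset.card_erase_lt_of_mem (Finset.min'_mem _ _)

variable [DecidableEq V]

/-- On the line through `b j`, `a • b j` gives the relation `a = 1 + (a - 1)` if the
representative of `a` exceeds `p / 2`, and the pair `a, -a` otherwise (so each pair occurs once). -/
def tripleFamily (s : {x : V // x ≠ 0}) : {x : V // x ≠ 0} → ℤ :=
  if (s : V) = leadTerm b s ∧ p < 2 * (leadCoeff b s).val then
    triple (b (pivot b s)) ((-leadCoeff b s) • b (pivot b s))
      ((leadCoeff b s - 1) • b (pivot b s))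
  else triple s (leadTerm b s - s) (-leadTerm b s)

theorem exists_tripleFamily_eq (s : {x : V // x ≠ 0}) :
    ∃ x y z : V, x + y + z = 0 ∧ tripleFamily b s = triple x y z := by
  unfold tripleFamily
  split_ifs
  · exact ⟨_, _, _, by module, rfl⟩
  · exact ⟨_, _, _, by abel, rfl⟩

theorem tripleFamily_smul {j : ι} {c : ZMod p} (hc : c • b j ≠ 0) :
    tripleFamily b ⟨c • b j, hc⟩ = if p < 2 * c.val then
      triple (b j) ((-c) • b j) ((c - 1) • b j) else triple (c • b j) 0 (-(c • b j)) := by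
  have hc0 : c ≠ 0 := by rintro rfl; simp at hc
  have hpivot : pivot b ⟨c • b j, hc⟩ = j := by
    simp [pivot, Finsupp.support_single, hc0]
  have hlead : leadCoeff b ⟨c • b j, hc⟩ = c := by simp [leadCoeff, hpivot]
  simp [tripleFamily, leadTerm, hpivot, hlead]

def tripleSpan : Submodule ℤ ({x : V // x ≠ 0} → ℤ) := span ℤ (Set.range (tripleFamily b))

theorem tripleFamily_mem_tripleSpan (s : {x : V // x ≠ 0}) : tripleFamily b s ∈ tripleSpan b :=
  subset_span ⟨s, rfl⟩

def tripleClass (x : V) : ({x : V // x ≠ 0} → ℤ) ⧸ tripleSpan b := (tripleSpan b).mkQ (dirac x)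

@[simp] theorem tripleClass_zero : tripleClass b 0 = 0 := by simp [tripleClass]

theorem tripleClass_add_add_eq_zero {x y z : V} (h : triple x y z ∈ tripleSpan b) :
    tripleClass b x + tripleClass b y + tripleClass b z = 0 := by
  simpa [tripleClass, triple] using (Submodule.Quotient.mk_eq_zero _).2 h

variable [NeZero p]

theorem tripleClass_smul_add_neg_smul (j : ι) (c : ZMod p) :
    tripleClass b (c • b j) + tripleClass b ((-c) • b j) = 0 := by
  have pair : ∀ c : ZMod p, c ≠ 0 → ¬ p < 2 * c.val →
      tripleClass b (c • b j) + tripleClass b ((-c) • b j) = 0 := by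
    intro c hc hsmall
    have h := tripleFamily_mem_tripleSpan b ⟨c • b j, smul_basis_ne_zero b hc j⟩
    rw [tripleFamily_smul, if_neg hsmall] at h
    simpa [neg_smul] using tripleClass_add_add_eq_zero b h
  by_cases hc : c = 0
  · simp [hc]
  by_cases hsmall : p < 2 * c.val
  · have hneg : (-c).val = p - c.val := by rw [ZMod.neg_val, if_neg hc]
    rw [add_comm]
    simpa using pair (-c) (neg_ne_zero.2 hc) (by omega)
  · exact pair c hc hsmall

theorem tripleClass_smul_add_one (j : ι) (k : ZMod p) :
    tripleClass b ((k + 1) • b j) = tripleClass b (k • b j) + tripleClass b (b j) := by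
  have neg : ∀ c : ZMod p, tripleClass b ((-c) • b j) = -tripleClass b (c • b j) :=
    fun c ↦ eq_neg_of_add_eq_zero_right (tripleClass_smul_add_neg_smul b j c)
  have step : ∀ c : ZMod p, p < 2 * c.val →
      tripleClass b (c • b j) = tripleClass b ((c - 1) • b j) + tripleClass b (b j) := by
    intro c hbig
    have hc : c ≠ 0 := by rintro rfl; simp at hbig
    have h := tripleFamily_mem_tripleSpan b ⟨c • b j, smul_basis_ne_zero b hc j⟩
    rw [tripleFamily_smul, if_pos hbig] at h
    have := tripleClass_add_add_eq_zero b h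
    rw [neg] at this
    linear_combination (norm := abel) -this
  by_cases hk : k = 0
  · simp [hk]
  by_cases hk' : k + 1 = 0
  · rw [hk', eq_neg_of_add_eq_zero_left hk', neg, one_smul]
    simp
  rcases ZMod.lt_two_mul_val_add_one_or_neg hk hk' with hbig | hbig
  · simpa using step _ hbig
  · have := step _ hbig
    rw [neg, show -k - 1 = -(k + 1) by ring, neg] at this
    linear_combination (norm := abel) this

def tripleClassHom (j : ι) : ZMod p →+ ({x : V // x ≠ 0} → ℤ) ⧸ tripleSpan b :=
  AddMonoidHom.mk' (fun c ↦ tripleClass b (c • b j))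
    (ZMod.map_add_of_map_add_one (g := fun c ↦ tripleClass b (c • b j))
      (by simpa using tripleClass_smul_add_one b j))

theorem tripleClass_eq_liftAddHom (x : V) :
    tripleClass b x = Finsupp.liftAddHom (tripleClassHom b) (b.repr x) := by
  induction hn : (b.repr x).support.card using Nat.strong_induction_on generalizing x with
  | _ n ih =>
  have hsingle : ∀ j (c : ZMod p),
      tripleClass b (c • b j) = Finsupp.liftAddHom (tripleClassHom b) (b.repr (c • b j)) := by
    simp [tripleClassHom]
  by_cases hx : x = 0
  · simp [hx]
  set s : {x : V // x ≠ 0} := ⟨x, hx⟩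
  by_cases hlead : x = leadTerm b s
  · rw [hlead]
    exact hsingle _ _
  have h := tripleFamily_mem_tripleSpan b s
  rw [tripleFamily, if_neg fun h' ↦ hlead h'.1] at h
  have hlt : (b.repr (leadTerm b s - x)).support.card < n := by
    rw [← hn]; exact card_support_repr_leadTerm_sub_lt b s
  have hrel := tripleClass_add_add_eq_zero b h
  rw [ih _ hlt (leadTerm b s - x) rfl, leadTerm, ← neg_smul, hsingle] at hrel
  simp only [map_sub, map_neg, neg_smul] at hrel
  linear_combination (norm := abel) hrel

theorem tripleSpan_eq_ker [Fintype V] : tripleSpan b = LinearMap.ker (weightedSum V) := by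
  refine le_antisymm (span_le.2 ?_) fun v hv ↦ ?_
  · rintro _ ⟨s, rfl⟩
    obtain ⟨x, y, z, hxyz, h⟩ := exists_tripleFamily_eq b s
    simp [h, weightedSum_triple, hxyz]
  · let ψ := (Finsupp.liftAddHom (tripleClassHom b)).comp b.repr.toAddMonoidHom
    have hfactor : (tripleSpan b).mkQ = ψ.toIntLinearMap ∘ₗ weightedSum V :=
      (Pi.basisFun ℤ _).ext fun s ↦ by
        simpa [← dirac_coe, ψ, tripleClass] using tripleClass_eq_liftAddHom b s
    rw [← Submodule.Quotient.mk_eq_zero, ← mkQ_apply, hfactor, LinearMap.comp_apply,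
      LinearMap.mem_ker.1 hv, map_zero]

end ElementaryAbelian

section Field

variable {F : Type} [Field F]

theorem mem_solSet_const_iff {k : ℕ} (χ : {x : F // x ≠ 0}) (σ : Fin k → F) :
    σ ∈ solSet F k (fun _ ↦ χ) ↔ ∑ i, σ i = 0 := by
  simp [solSet, ← Finset.mul_sum, χ.2]

variable (F) in
theorem exists_zmod_basis [Fintype F] :
    ∃ (p : ℕ) (_ : NeZero p) (_ : Module (ZMod p) F) (n : ℕ),
      Nonempty (Module.Basis (Fin n) (ZMod p) F) := by
  have : Fact (ringChar F).Prime := ⟨CharP.char_is_prime F _⟩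
  let := ZMod.algebra F (ringChar F)
  exact ⟨ringChar F, inferInstance, inferInstance, _, ⟨Module.finBasis (ZMod (ringChar F)) F⟩⟩

variable [DecidableEq F]

theorem freq_eq_sum_dirac (k : ℕ) (σ : Fin k → F) :
    freq F k σ = ∑ i, dirac (σ i) := by
  ext s
  simp [freq, dirac, Finset.card_filter, -Finset.sum_boole]

theorem freqModule_le_ker [Fintype F] (k : ℕ) (χ : {x : F // x ≠ 0}) :
    freqModule F k (fun _ ↦ χ) ≤ LinearMap.ker (weightedSum F) := by
  rw [freqModule, span_le]
  rintro _ ⟨σ, hσ, rfl⟩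
  simpa [freq_eq_sum_dirac] using (mem_solSet_const_iff χ σ).1 hσ

theorem triple_mem_freqModule {k : ℕ} (hk : 3 ≤ k) (χ : {x : F // x ≠ 0}) {x y z : F}
    (h : x + y + z = 0) : triple x y z ∈ freqModule F k (fun _ ↦ χ) := by
  obtain ⟨m, rfl⟩ := Nat.exists_eq_add_of_le hk
  let σ : Fin (3 + m) → F := Fin.append ![x, y, z] 0
  have hσ : freq F (3 + m) σ = triple x y z := by
    simp [freq_eq_sum_dirac, Fin.sum_univ_add, σ, triple, Fin.sum_univ_three]
  rw [← hσ]
  refine subset_span ⟨σ, (mem_solSet_const_iff χ σ).2 ?_, rfl⟩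
  simpa [Fin.sum_univ_add, σ, Fin.sum_univ_three] using h

theorem freqModule_eq_ker [Fintype F] {k : ℕ} (hk : 3 ≤ k) (χ : {x : F // x ≠ 0}) :
    freqModule F k (fun _ ↦ χ) = LinearMap.ker (weightedSum F) := by
  obtain ⟨p, _, _, n, ⟨b⟩⟩ := exists_zmod_basis F
  refine le_antisymm (freqModule_le_ker k χ) ?_
  rw [← tripleSpan_eq_ker b, tripleSpan, span_le]
  rintro _ ⟨s, rfl⟩
  obtain ⟨x, y, z, hxyz, h⟩ := exists_tripleFamily_eq b s
  exact h ▸ triple_mem_freqModule hk χ hxyz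

end Field

end FreqModule

/-- **Lemma 3.1.** For any prime power `q` and any `χ ∈ 𝔽_q*`, the
ℤ-module `𝔐_q(χ,χ,χ)` possesses a ℤ-basis `𝔟₁,…,𝔟_{q−1}` of non-negative integer
vectors such that `‖𝔟_i‖₁ ≤ 3` and `Σ_{s∈𝔽_q*} 𝔟_{i,s}·s = 0` in `𝔽_q` for every
`i`, and the `(q−1)×(q−1)` matrix with columns `𝔟₁,…,𝔟_{q−1}` has determinant of
absolute value `q`.  Furthermore, for every `k₀ > 3`, `𝔐_q(χ,…,χ)` (with `k₀`
coefficients) equals `𝔐_q(χ,χ,χ)`. -/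
theorem stmt10 (F : Type) [Field F] [Fintype F] [DecidableEq F]
    (χ : {x : F // x ≠ 0}) :
    (∃ b : {x : F // x ≠ 0} → ({x : F // x ≠ 0} → ℤ),
      (∀ i s, 0 ≤ b i s) ∧
      (∀ i, ∑ s, (b i s).natAbs ≤ 3) ∧
      (∀ i, ∑ s : {x : F // x ≠ 0}, (b i s) • (s : F) = 0) ∧
      LinearIndependent ℤ b ∧
      Submodule.span ℤ (Set.range b) = freqModule F 3 (fun _ => χ) ∧
      (Matrix.of fun s i => b i s).det.natAbs = Fintype.card F) ∧
    (∀ k₀ : ℕ, 3 < k₀ →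
      freqModule F k₀ (fun _ => χ) = freqModule F 3 (fun _ => χ)) := by
  obtain ⟨p, _, _, n, ⟨e⟩⟩ := exists_zmod_basis F
  have hspan := tripleSpan_eq_ker e
  refine ⟨⟨tripleFamily e, fun i s ↦ ?_, fun i ↦ ?_, fun i ↦ ?_,
    linearIndependent_of_span_eq_of_finiteIndex hspan,
    hspan.trans (freqModule_eq_ker le_rfl χ).symm, ?_⟩,
    fun k hk ↦ (freqModule_eq_ker hk.le χ).trans (freqModule_eq_ker le_rfl χ).symm⟩
  · obtain ⟨x, y, z, -, h⟩ := exists_tripleFamily_eq e i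
    exact h ▸ triple_nonneg x y z s
  · obtain ⟨x, y, z, -, h⟩ := exists_tripleFamily_eq e i
    exact h ▸ sum_natAbs_triple_le x y z
  · rw [← weightedSum_apply, ← LinearMap.mem_ker, ← hspan]
    exact subset_span ⟨i, rfl⟩
  · rw [natAbs_det_of_span_eq_of_finiteIndex hspan, card_quotient_ker_weightedSum]
end

section
/- For every odd prime p, det(A_p) = p. -/
/-!
Write `p = 2m + 1` and list the indices `1, …, p − 1` in the order `1, …, m, p − 1, p − 2, …, m + 1`.
In this order `A_p` is the block matrix `[[1, N], [1, N + D + e₁ 𝟙ᵀ]]`, where `N` is the lower shift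
and `D` is lower bidiagonal with diagonal `(1, …, 1, 2)` and subdiagonal `−1`; so `det A_p` is the
determinant of the Schur complement `D + e₁ 𝟙ᵀ`. Since `D x = e₁` for `x = (1, …, 1, 1/2)`, the matrix
determinant lemma gives `det A_p = det D · (1 + ∑ x) = 2 (m + 1/2) = p`.
-/

/-- The matrix `A_p` from the paper, for an odd prime `p`.  Rows and columns are
indexed by `{1, …, p−1}` (here realised as `Fin (p-1)`, with `i : Fin (p-1)`
corresponding to the value `i+1`).  The `j`-th column equals `e_j + e_{p−j}` for
`1 ≤ j ≤ (p−1)/2`, and `e_j + e_{p−1} + e_{p−j+1}` for `(p+1)/2 ≤ j ≤ p−1`;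
coinciding indices are added. -/
def Apmatrix (p : ℕ) : Matrix (Fin (p - 1)) (Fin (p - 1)) ℤ :=
  Matrix.of fun i j =>
    (if (i : ℕ) + 1 = (j : ℕ) + 1 then 1 else 0) +
      (if (j : ℕ) + 1 ≤ (p - 1) / 2 then
        (if (i : ℕ) + 1 = p - ((j : ℕ) + 1) then 1 else 0)
      else
        (if (i : ℕ) + 1 = p - 1 then 1 else 0) +
          (if (i : ℕ) + 1 = p - ((j : ℕ) + 1) + 1 then 1 else 0))

open Matrix

section DeterminantLemma

variable {ι R : Type*} [Fintype ι] [DecidableEq ι] [CommRing R]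

theorem Matrix.det_add_vecMulVec_of_mulVec_eq {A : Matrix ι ι R} {x u : ι → R}
    (h : A *ᵥ x = u) (v : ι → R) :
    (A + vecMulVec u v).det = A.det * (1 + v ⬝ᵥ x) := by
  have hfactor : A + vecMulVec (A *ᵥ x) v = A * (1 + vecMulVec x v) := by
    rw [Matrix.mul_add, Matrix.mul_one, mul_vecMulVec]
  rw [← h, hfactor, det_mul, vecMulVec_eq Unit, det_one_add_replicateCol_mul_replicateRow]

end DeterminantLemma

section ShiftMatrices

variable {R : Type*} [CommRing R] {n : ℕ}

variable (R) in
def lowerShift (m : ℕ) : Matrix (Fin m) (Fin m) R :=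
  of fun k l => if (k : ℕ) = l + 1 then 1 else 0

variable (R) in
def lowerBidiag (n : ℕ) : Matrix (Fin (n + 1)) (Fin (n + 1)) R :=
  of fun k l => if k = l then (if k = Fin.last n then 2 else 1)
    else if (k : ℕ) = l + 1 then -1 else 0

theorem det_lowerBidiag : (lowerBidiag R n).det = 2 := by
  rw [det_of_isLowerTriangular]
  · simp [lowerBidiag]
  · intro k l hkl
    have : (k : ℕ) < l := hkl
    simp only [lowerBidiag, of_apply]
    split_ifs <;> first | rfl | omega

theorem lowerBidiag_mulVec [Invertible (2 : R)] :
    lowerBidiag R n *ᵥ (fun k => if k = Fin.last n then ⅟2 else 1) = Pi.single 0 1 := by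
  have hdiag (k : Fin (n + 1)) :
      (if k = Fin.last n then 2 else 1) * (if k = Fin.last n then ⅟2 else 1) = (1 : R) := by
    split_ifs <;> simp
  ext k
  simp only [mulVec, dotProduct, lowerBidiag, of_apply]
  induction k using Fin.cases with
  | zero =>
    rw [Finset.sum_eq_single 0 (fun l _ hl => by simp [Ne.symm hl]) (by simp), if_pos rfl,
      hdiag, Pi.single_eq_same]
  | succ j =>
    rw [Finset.sum_eq_add j.succ j.castSucc j.castSucc_lt_succ.ne' ?_ (by simp) (by simp),
      if_pos rfl, hdiag, if_neg j.castSucc_lt_succ.ne', if_pos (by simp),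
      if_neg (Fin.castSucc_ne_last j), Pi.single_eq_of_ne (Fin.succ_ne_zero j)]
    · ring
    · rintro l - ⟨hl₁, hl₂⟩
      have : (j.succ : ℕ) ≠ l + 1 := fun h => hl₂ (Fin.ext (by simpa using h.symm))
      rw [if_neg (Ne.symm hl₁), if_neg this, zero_mul]

theorem det_lowerBidiag_add_vecMulVec [Invertible (2 : R)] :
    (lowerBidiag R n + vecMulVec (Pi.single 0 1) 1).det = (2 * n + 3 : R) := by
  rw [det_add_vecMulVec_of_mulVec_eq lowerBidiag_mulVec, det_lowerBidiag, one_dotProduct,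
    Fin.sum_univ_castSucc]
  simp only [Fin.castSucc_ne_last, if_false, if_true, Finset.sum_const, Finset.card_univ,
    Fintype.card_fin, nsmul_eq_mul, mul_one]
  linear_combination mul_invOf_self (2 : R)

end ShiftMatrices

def foldEquiv (m : ℕ) : Fin m ⊕ Fin m ≃ Fin (2 * m + 1 - 1) :=
  ((Equiv.refl _).sumCongr Fin.revPerm).trans (finSumFinEquiv.trans (finCongr (by omega)))

theorem foldEquiv_inl_val (m : ℕ) (k : Fin m) : (foldEquiv m (.inl k) : ℕ) = k := rfl

theorem foldEquiv_inr_val (m : ℕ) (k : Fin m) : (foldEquiv m (.inr k) : ℕ) = 2 * m - 1 - k := by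
  simp only [foldEquiv, Equiv.trans_apply, Equiv.sumCongr_apply, Sum.map_inr, Fin.revPerm_apply,
    finSumFinEquiv_apply_right, finCongr_apply, Fin.val_cast, Fin.val_natAdd, Fin.val_rev]
  omega

section Apmatrix

variable {R : Type*} [CommRing R]

theorem Apmatrix_map_submatrix_foldEquiv (n : ℕ) :
    ((Apmatrix (2 * (n + 1) + 1)).map (Int.cast : ℤ → R)).submatrix
        (foldEquiv (n + 1)) (foldEquiv (n + 1)) =
      fromBlocks 1 (lowerShift R (n + 1)) 1
        (lowerShift R (n + 1) + (lowerBidiag R n + vecMulVec (Pi.single 0 1) 1)) := by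
  ext (k | k) (l | l) <;>
  · have := k.isLt
    have := l.isLt
    simp only [Apmatrix, lowerShift, lowerBidiag, submatrix_apply, map_apply, of_apply,
      foldEquiv_inl_val, foldEquiv_inr_val, fromBlocks_apply₁₁, fromBlocks_apply₁₂,
      fromBlocks_apply₂₁, fromBlocks_apply₂₂, one_apply, Matrix.add_apply, vecMulVec_apply,
      Pi.single_apply, Pi.one_apply, Fin.ext_iff, Fin.val_last, Fin.val_zero]
    push_cast
    split_ifs <;> first | omega | norm_num

theorem det_map_Apmatrix [Invertible (2 : R)] (m : ℕ) :
    ((Apmatrix (2 * m + 1)).map (Int.cast : ℤ → R)).det = 2 * m + 1 := by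
  cases m with
  | zero => simp
  | succ n =>
    rw [← det_submatrix_equiv_self (foldEquiv (n + 1)), Apmatrix_map_submatrix_foldEquiv,
      det_fromBlocks_one₁₁, Matrix.one_mul, add_sub_cancel_left, det_lowerBidiag_add_vecMulVec]
    push_cast
    ring

end Apmatrix

theorem stmt12_general (p : ℕ) (hodd : Odd p) :
    (Apmatrix p).det = (p : ℤ) := by
  obtain ⟨m, rfl⟩ := hodd
  exact_mod_cast (Int.cast_det (R := ℚ) _).trans (det_map_Apmatrix m)

/-- For every odd prime `p`, `det (A_p) = p`. -/
theorem stmt12 (p : ℕ) (hp : p.Prime) (hodd : Odd p) :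
    (Apmatrix p).det = (p : ℤ) :=
  stmt12_general p hodd
end

section
/- The q−1 vectors (b_h)_{h∈𝔽_q*} are ℤ-linearly independent, the ℤ-submodule of ℤ^{𝔽_q*} they span contains 𝔐, and the (q−1)×(q−1) matrix whose columns are the vectors (b_h)_{h∈𝔽_q*} has determinant of absolute value q = p^ℓ. -/
open FreqModule

open Finset Matrix

namespace FreqModule

theorem sum_freq_smul (F : Type) [Field F] [Fintype F] [DecidableEq F] (k : ℕ) (σ : Fin k → F) :
    ∑ s, freq F k σ s • (s : F) = ∑ i, σ i := by
  set f : F → F := fun x => (#{i | σ i = x} : ℤ) • x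
  have hzero : ∑ s : {x : F // ¬x ≠ 0}, f s = 0 :=
    sum_eq_zero fun s _ => by simp [f, not_not.mp s.2]
  calc ∑ s, freq F k σ s • (s : F)
      = ∑ x, f x := by rw [← Fintype.sum_subtype_add_sum_subtype (· ≠ 0) f, hzero, add_zero]; rfl
    _ = ∑ x, ∑ i with σ i = x, x := by simp [f, sum_const]
    _ = ∑ i, σ i := sum_fiberwise' _ σ id

end FreqModule

namespace DigitMatrix

variable {p : ℕ} {ι V : Type*} [AddCommGroup V] [Module (ZMod p) V] (v : Module.Basis ι (ZMod p) V)

/-- The digits `a_i(h) ∈ {0, …, p - 1}` of the paper. -/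
noncomputable def digitMatrix : Matrix ι {x : V // x ≠ 0} ℤ :=
  Matrix.of fun i h => ((v.repr h i).val : ℤ)

theorem val_repr_neg_basis [Fact (1 < p)] [DecidableEq ι] (i j : ι) :
    ((v.repr (-(v j)) i).val : ℤ) = if i = j then (p : ℤ) - 1 else 0 := by
  rw [map_neg, v.repr_self, Finsupp.neg_apply]
  by_cases h : i = j
  · subst h
    rw [Finsupp.single_eq_same, ZMod.val_neg_of_ne_zero, ZMod.val_one, if_pos rfl]
    have := (Fact.out : 1 < p)
    omega
  · simp [Finsupp.single_eq_of_ne h, h]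

variable [DecidableEq V]

noncomputable def negBasisMatrix : Matrix {x : V // x ≠ 0} ι ℤ :=
  Matrix.of fun s i => if (s : V) = -(v i) then 1 else 0

variable [Fintype V] [Fact (1 < p)]

theorem intCast_digitMatrix_mulVec (w : {x : V // x ≠ 0} → ℤ) (i : ι) :
    (((digitMatrix v *ᵥ w) i : ℤ) : ZMod p) = v.repr (∑ h, w h • (h : V)) i := by
  simp [mulVec, dotProduct, digitMatrix, map_sum, Finsupp.finsetSum_apply, mul_comm]

variable [DecidableEq ι]

theorem digitMatrix_mul_negBasisMatrix :
    digitMatrix v * negBasisMatrix v = ((p : ℤ) - 1) • (1 : Matrix ι ι ℤ) := by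
  ext i j
  have hneg : (-(v j) : V) ≠ 0 := neg_ne_zero.mpr (v.ne_zero j)
  rw [mul_apply, sum_eq_single ⟨-(v j), hneg⟩]
  · simp only [digitMatrix, negBasisMatrix, of_apply, val_repr_neg_basis, if_pos,
      Matrix.smul_apply, Matrix.one_apply]
    split_ifs <;> simp
  · intro h _ hh
    simp [negBasisMatrix, Subtype.ext_iff.not.mp hh]
  · simp

variable [Fintype ι]

theorem det_one_add_negBasisMatrix_mul_digitMatrix :
    (1 + negBasisMatrix v * digitMatrix v).det = (p : ℤ) ^ Fintype.card ι := by
  have h : (1 : Matrix ι ι ℤ) + ((p : ℤ) - 1) • 1 = (p : ℤ) • 1 := by module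
  rw [det_one_add_mul_comm, digitMatrix_mul_negBasisMatrix, h, det_smul, det_one, mul_one]

theorem one_add_negBasisMatrix_mul_digitMatrix_mul_negBasisMatrix :
    (1 + negBasisMatrix v * digitMatrix v) * negBasisMatrix v = (p : ℤ) • negBasisMatrix v := by
  rw [Matrix.add_mul, Matrix.one_mul, Matrix.mul_assoc, digitMatrix_mul_negBasisMatrix,
    Matrix.mul_smul, Matrix.mul_one]
  module

theorem mem_span_col_of_dvd_digitMatrix_mulVec {w : {x : V // x ≠ 0} → ℤ}
    (hw : ∀ i, (p : ℤ) ∣ (digitMatrix v *ᵥ w) i) :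
    w ∈ Submodule.span ℤ (Set.range (1 + negBasisMatrix v * digitMatrix v).col) := by
  choose t ht using hw
  rw [← range_mulVecLin]
  refine ⟨w - negBasisMatrix v *ᵥ t, ?_⟩
  have hVw : digitMatrix v *ᵥ w = (p : ℤ) • t := funext ht
  rw [mulVecLin_apply, mulVec_sub, mulVec_mulVec,
    one_add_negBasisMatrix_mul_digitMatrix_mul_negBasisMatrix, add_mulVec, one_mulVec,
    ← mulVec_mulVec, hVw, mulVec_smul, smul_mulVec]
  abel

theorem mem_span_col_of_sum_smul_eq_zero {w : {x : V // x ≠ 0} → ℤ}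
    (hw : ∑ h, w h • (h : V) = 0) :
    w ∈ Submodule.span ℤ (Set.range (1 + negBasisMatrix v * digitMatrix v).col) :=
  mem_span_col_of_dvd_digitMatrix_mulVec v fun i =>
    (ZMod.intCast_zmod_eq_zero_iff_dvd _ _).mp (by simp [intCast_digitMatrix_mulVec, hw])

end DigitMatrix

open DigitMatrix in
theorem stmt13_general (p : ℕ) [Fact p.Prime] (ℓ : ℕ)
    (F : Type) [Field F] [Fintype F] [DecidableEq F] [Algebra (ZMod p) F]
    (v : Module.Basis (Fin ℓ) (ZMod p) F)
    (k₀ : ℕ)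
    (b : {x : F // x ≠ 0} → ({x : F // x ≠ 0} → ℤ))
    (hb : ∀ h s : {x : F // x ≠ 0},
      b h s = (if s = h then 1 else 0) +
        ∑ i : Fin ℓ, ((v.repr (h : F) i).val : ℤ) * (if (s : F) = -(v i) then 1 else 0)) :
    LinearIndependent ℤ b ∧
    freqModule F k₀ (fun _ => (⟨1, one_ne_zero⟩ : {x : F // x ≠ 0})) ≤
      Submodule.span ℤ (Set.range b) ∧
    (Matrix.of fun s h => b h s).det.natAbs = p ^ ℓ := by
  set M := 1 + negBasisMatrix v * digitMatrix v
  have hM : Matrix.of (fun s h => b h s) = M := by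
    ext s h
    simp [hb, M, mul_apply, digitMatrix, negBasisMatrix, one_apply, mul_comm]
  have hbM : b = M.col := by
    rw [← hM]
    rfl
  have hdet : M.det = (p : ℤ) ^ ℓ := by
    rw [det_one_add_negBasisMatrix_mul_digitMatrix, Fintype.card_fin]
  refine ⟨?_, ?_, ?_⟩
  · rw [hbM]
    exact linearIndependent_cols_of_det_ne_zero (by simp [hdet, (Fact.out : p.Prime).ne_zero])
  · rw [freqModule, Submodule.span_le, hbM]
    rintro _ ⟨σ, hσ, rfl⟩
    refine mem_span_col_of_sum_smul_eq_zero v ?_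
    rw [sum_freq_smul]
    simpa [solSet] using hσ
  · rw [hM, hdet, ← Nat.cast_pow, Int.natAbs_natCast]

/-- Let `p` be a prime, `ℓ ≥ 1`, `q = p^ℓ`, and let `F` be the
field with `q` elements, with a fixed `𝔽_p`-basis `v₀,…,v_{ℓ−1}`.  For `h ∈ 𝔽_q*`
write `h = Σ_i a_i(h)·v_i` with `a_i(h) ∈ {0,…,p−1}` and set
`b_h = e_h + Σ_i a_i(h)·e_{−v_i} ∈ ℤ^{𝔽_q*}` (coinciding coordinates added).
Then the `q−1` vectors `(b_h)_{h∈𝔽_q*}` are ℤ-linearly independent, the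
ℤ-submodule they span contains the module `𝔐` generated by the frequency
vectors of the solutions of `σ₁ + ⋯ + σ_{k₀} = 0`, and the `(q−1)×(q−1)` matrix
with columns `(b_h)` has determinant of absolute value `q = p^ℓ`. -/
theorem stmt13 (p : ℕ) [Fact p.Prime] (ℓ : ℕ) (hℓ : 1 ≤ ℓ)
    (F : Type) [Field F] [Fintype F] [DecidableEq F] [Algebra (ZMod p) F]
    (v : Module.Basis (Fin ℓ) (ZMod p) F)
    (k₀ : ℕ) (hk₀ : 3 ≤ k₀)
    (b : {x : F // x ≠ 0} → ({x : F // x ≠ 0} → ℤ))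
    (hb : ∀ h s : {x : F // x ≠ 0},
      b h s = (if s = h then 1 else 0) +
        ∑ i : Fin ℓ, ((v.repr (h : F) i).val : ℤ) * (if (s : F) = -(v i) then 1 else 0)) :
    LinearIndependent ℤ b ∧
    freqModule F k₀ (fun _ => (⟨1, one_ne_zero⟩ : {x : F // x ≠ 0})) ≤
      Submodule.span ℤ (Set.range b) ∧
    (Matrix.of fun s h => b h s).det.natAbs = p ^ ℓ :=
  stmt13_general p ℓ F v k₀ b hb
end

section
/- M ∩ (𝔡ℤ)^m = 𝔡·M; that is, a vector y ∈ M has all of its coordinates divisible by 𝔡 if and only if y = 𝔡·x for some x ∈ M. -/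
/-! Write `y = ∑ cᵢ bᵢ = c ᵥ* B`. Multiplying on the right by the adjugate gives
`det B • c = y ᵥ* adj B`, so if `𝔡` divides every coordinate of `y` it divides `det B • c`,
and coprimality with `det B` leaves `𝔡 ∣ cᵢ` for all `i`; then `y = 𝔡 • ∑ (cᵢ / 𝔡) bᵢ`. -/

namespace Matrix

variable {n R : Type*} [Fintype n] [DecidableEq n] [CommRing R]

theorem dvd_of_isCoprime_det_of_dvd_vecMul {A : Matrix n n R} {d : R} (hd : IsCoprime d A.det)
    {c : n → R} (h : ∀ j, d ∣ (c ᵥ* A) j) (i : n) : d ∣ c i := by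
  have hadj : A.det • c = (c ᵥ* A) ᵥ* A.adjugate := by
    rw [vecMul_vecMul, mul_adjugate, vecMul_smul, vecMul_one]
  have hdet : d ∣ A.det * c i := by
    rw [← smul_eq_mul, ← Pi.smul_apply, hadj, vecMul, dotProduct]
    exact Finset.dvd_sum fun j _ => (h j).mul_right _
  exact hd.dvd_of_dvd_mul_left hdet

end Matrix

open Matrix in
theorem Submodule.exists_mem_span_smul_eq_of_dvd {n R : Type*} [Fintype n] [DecidableEq n]
    [CommRing R] {b : n → n → R} {d : R} (hd : IsCoprime d (Matrix.of b).det)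
    {y : n → R} (hy : y ∈ span R (Set.range b)) (hdvd : ∀ i, d ∣ y i) :
    ∃ x ∈ span R (Set.range b), y = d • x := by
  obtain ⟨c, rfl⟩ := (mem_span_range_iff_exists_fun R).mp hy
  have hvec : ∑ i, c i • b i = c ᵥ* Matrix.of b := (Matrix.vecMul_eq_sum c _).symm
  rw [hvec] at hdvd
  choose e he using Matrix.dvd_of_isCoprime_det_of_dvd_vecMul hd hdvd
  refine ⟨∑ i, e i • b i, (mem_span_range_iff_exists_fun R).mpr ⟨e, rfl⟩, ?_⟩
  simp only [Finset.smul_sum, smul_smul, he]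

theorem stmt14_general (m q d : ℕ)
    (b : Fin m → (Fin m → ℤ))
    (hdet : (Matrix.of fun i j : Fin m => b j i).det.natAbs = q)
    (hcop : Nat.Coprime d q) :
    ∀ y ∈ Submodule.span ℤ (Set.range b),
      ((∀ i : Fin m, (d : ℤ) ∣ y i) ↔
        ∃ x ∈ Submodule.span ℤ (Set.range b), y = (d : ℤ) • x) := by
  intro y hy
  have hd : IsCoprime (d : ℤ) (Matrix.of b).det := by
    rw [← Matrix.det_transpose, Int.isCoprime_iff_gcd_eq_one, Int.gcd_eq_natAbs,
      Int.natAbs_natCast]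
    exact hdet ▸ hcop
  refine ⟨Submodule.exists_mem_span_smul_eq_of_dvd hd hy, ?_⟩
  rintro ⟨x, -, rfl⟩ i
  exact dvd_mul_right _ _

/-- Let `b₁, …, b_m ∈ ℤ^m` be vectors whose `m × m` matrix has
determinant of absolute value `q`, let `M ⊆ ℤ^m` be the ℤ-submodule they span,
and let `𝔡 ≥ 1` be coprime to `q`.  Then a vector `y ∈ M` has all of its
coordinates divisible by `𝔡` if and only if `y = 𝔡 • x` for some `x ∈ M`. -/
theorem stmt14 (m q d : ℕ) (hm : 1 ≤ m) (hq : 1 ≤ q) (hd : 1 ≤ d)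
    (b : Fin m → (Fin m → ℤ))
    (hdet : (Matrix.of fun i j : Fin m => b j i).det.natAbs = q)
    (hcop : Nat.Coprime d q) :
    ∀ y ∈ Submodule.span ℤ (Set.range b),
      ((∀ i : Fin m, (d : ℤ) ∣ y i) ↔
        ∃ x ∈ Submodule.span ℤ (Set.range b), y = (d : ℤ) • x) :=
  stmt14_general m q d b hdet hcop
end

section
/- The function Φ is strictly decreasing on [0,1]; in particular, Φ(z) < Φ(0) for all 0 < z ≤ 1. -/
/-- The real zeta function `ζ(s) = Σ_{ℓ≥1} ℓ^{−s}`, written as a sum over `ℕ`. -/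
noncomputable def zetaReal (s : ℝ) : ℝ := ∑' n : ℕ, ((n : ℝ) + 1) ^ (-s)

/-- The generating function `D(z) = ζ(α)⁻¹ · Σ_{ℓ≥1} z^ℓ/ℓ^α` of the power-law
degree distribution `P[d = ℓ] ∝ ℓ^{−α}`. -/
noncomputable def powerLawD (α : ℝ) (z : ℝ) : ℝ :=
  (zetaReal α)⁻¹ * ∑' n : ℕ, z ^ (n + 1) / ((n : ℝ) + 1) ^ α

/-- The function `Φ(z) = D(1 − z^{k−1}) − (ζ(α−1)/(ζ(α)·k))·(1 − k·z^{k−1} + (k−1)·z^k)`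
for the power-law example. -/
noncomputable def powerLawPhi (α : ℝ) (k : ℕ) (z : ℝ) : ℝ :=
  powerLawD α (1 - z ^ (k - 1)) -
    (zetaReal (α - 1) / (zetaReal α * (k : ℝ))) *
      (1 - (k : ℝ) * z ^ (k - 1) + ((k : ℝ) - 1) * z ^ k)

/-! Writing `u = z^{k-1}`, the chain rule gives
`Φ'(z) = (k-1) z^{k-2} ζ(α)⁻¹ ((1-z) ζ(α-1) - ∑ (1-u)^n (n+1)^{1-α})`, so `Φ' < 0` on `(0,1)` amounts
to `(1-z) ζ(α-1) < ∑ (1-u)^n (n+1)^{1-α}`. Since `α ≥ 3`, `(n+1)^{1-α} ≤ 1/(n(n+1))`, and the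
telescoping identity for `∑ (1-v^n)/(n(n+1))` together with `∑ v^{i+1}/(i+1) = -log(1-v)` bounds
the deficit `ζ(α-1) - ∑ (1-u)^n (n+1)^{1-α}` by `u log(1/u)/(1-u)`; as `k ≥ 3`,
`u log(1/u) ≤ 2z/e < z`. -/

open Real Set Finset

lemma summable_one_add_rpow_neg {s : ℝ} (hs : 1 < s) :
    Summable fun n : ℕ => ((n : ℝ) + 1) ^ (-s) := by
  have h := (summable_nat_add_iff 1).mpr (Real.summable_nat_rpow.mpr (by linarith : -s < -1))
  exact h.congr fun n => by push_cast; rfl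

lemma one_le_tsum_one_add_rpow_neg {s : ℝ} (hs : 1 < s) :
    1 ≤ ∑' n : ℕ, ((n : ℝ) + 1) ^ (-s) := by
  simpa using (summable_one_add_rpow_neg hs).le_tsum 0 fun n _ => by positivity

lemma zetaReal_pos {s : ℝ} (hs : 1 < s) : 0 < zetaReal s :=
  one_pos.trans_le (one_le_tsum_one_add_rpow_neg hs)

lemma negMulLog_le_exp_neg_one {t : ℝ} (ht : 0 < t) : negMulLog t ≤ exp (-1) := by
  have h := log_le_sub_one_of_pos (show 0 < exp (-1) / t by positivity)
  rw [log_div (exp_pos _).ne' ht.ne', log_exp, le_sub_iff_add_le, le_div_iff₀ ht] at h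
  rw [negMulLog]
  nlinarith

lemma negMulLog_pow_lt {z : ℝ} {m : ℕ} (hm : 2 ≤ m) (hz0 : 0 < z) (hz1 : z < 1) :
    negMulLog (z ^ m) < z := by
  obtain ⟨j, rfl⟩ : ∃ j, m = j + 2 := ⟨m - 2, by omega⟩
  have hlog : 0 < -log z := neg_pos.2 (log_neg hz0 hz1)
  have hbound := negMulLog_le_exp_neg_one (pow_pos hz0 (j + 1))
  have he : 2 * exp (-1) < 1 := by
    rw [exp_neg, ← div_eq_mul_inv, div_lt_one (exp_pos 1)]
    exact lt_trans (by norm_num) exp_one_gt_d9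
  simp only [negMulLog, log_pow] at hbound ⊢
  push_cast at hbound ⊢
  have hx : 0 < z ^ (j + 1) * -log z := by positivity
  calc -z ^ (j + 2) * ((j + 2 : ℝ) * log z) = z * ((j + 2) * (z ^ (j + 1) * -log z)) := by ring
    _ ≤ z * (2 * ((j + 1) * (z ^ (j + 1) * -log z))) := by
      refine mul_le_mul_of_nonneg_left ?_ hz0.le
      nlinarith [(j.cast_nonneg : (0 : ℝ) ≤ j)]
    _ ≤ z * (2 * exp (-1)) := by gcongr; linarith
    _ < z := by nlinarith

lemma sum_range_succ_one_sub_pow_div (v : ℝ) (N : ℕ) :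
    ∑ n ∈ range (N + 1), (1 - v ^ n) / (n * (n + 1)) =
      (1 - v) * ∑ i ∈ range N, v ^ i / (i + 1) - (1 - v ^ N) / (N + 1) := by
  induction N with
  | zero => simp
  | succ N ih =>
    rw [sum_range_succ, ih, sum_range_succ (fun i => v ^ i / ((i : ℝ) + 1))]
    push_cast
    field_simp
    ring

lemma sum_range_one_sub_pow_div_le {v : ℝ} (hv0 : 0 < v) (hv1 : v < 1) (N : ℕ) :
    ∑ n ∈ range N, (1 - v ^ n) / (n * (n + 1)) ≤ (1 - v) * -log (1 - v) / v := by
  have hvn : ∀ n : ℕ, 0 ≤ 1 - v ^ n := fun n => sub_nonneg.2 (pow_le_one₀ hv0.le hv1.le)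
  have hlog : ∑ i ∈ range N, v ^ (i + 1) / (i + 1) ≤ -log (1 - v) :=
    sum_le_hasSum _ (fun i _ => by positivity)
      (hasSum_pow_div_log_of_abs_lt_one (by rwa [abs_of_pos hv0]))
  calc ∑ n ∈ range N, (1 - v ^ n) / (n * (n + 1))
      ≤ ∑ n ∈ range (N + 1), (1 - v ^ n) / (n * (n + 1)) := by
        rw [sum_range_succ]
        linarith [div_nonneg (hvn N) (by positivity : (0 : ℝ) ≤ N * (N + 1))]
    _ ≤ (1 - v) * ∑ i ∈ range N, v ^ i / (i + 1) := by
        rw [sum_range_succ_one_sub_pow_div]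
        linarith [div_nonneg (hvn N) (by positivity : (0 : ℝ) ≤ N + 1)]
    _ = (1 - v) * (∑ i ∈ range N, v ^ (i + 1) / (i + 1)) / v := by
        rw [mul_div_assoc, sum_div]
        congr 1
        refine sum_congr rfl fun i _ => ?_
        field_simp
        ring
    _ ≤ (1 - v) * -log (1 - v) / v := by gcongr

lemma add_one_rpow_neg_le_one_div_mul_add_one {s : ℝ} (hs : 2 ≤ s) {n : ℕ} (hn : 1 ≤ n) :
    ((n : ℝ) + 1) ^ (-s) ≤ 1 / (n * (n + 1)) := by
  have h1 : (1 : ℝ) ≤ n + 1 := by linarith [(Nat.one_le_cast (α := ℝ)).2 hn]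
  calc ((n : ℝ) + 1) ^ (-s) ≤ ((n : ℝ) + 1) ^ (-2 : ℝ) :=
        rpow_le_rpow_of_exponent_le h1 (by linarith)
    _ = 1 / ((n + 1) * (n + 1)) := by
        rw [rpow_neg (by positivity), rpow_two, one_div, sq]
    _ ≤ 1 / (n * (n + 1)) := by
        have : (0 : ℝ) < n := by exact_mod_cast hn
        gcongr
        linarith

lemma tsum_one_sub_pow_mul_rpow_neg_le {s u : ℝ} (hs : 2 ≤ s) (hu0 : 0 < u) (hu1 : u < 1) :
    ∑' n : ℕ, (1 - (1 - u) ^ n) * ((n : ℝ) + 1) ^ (-s) ≤ negMulLog u / (1 - u) := by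
  have hvn : ∀ n : ℕ, 0 ≤ 1 - (1 - u) ^ n := fun n =>
    sub_nonneg.2 (pow_le_one₀ (by linarith) (by linarith))
  have hterm : ∀ n : ℕ, (1 - (1 - u) ^ n) * ((n : ℝ) + 1) ^ (-s) ≤
      (1 - (1 - u) ^ n) / (n * (n + 1)) := by
    rintro (_ | n)
    · simp
    · rw [div_eq_mul_one_div]
      exact mul_le_mul_of_nonneg_left
        (add_one_rpow_neg_le_one_div_mul_add_one hs (by omega)) (hvn _)
  refine tsum_le_of_sum_range_le (fun n => mul_nonneg (hvn n) (by positivity)) fun N => ?_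
  calc ∑ n ∈ range N, (1 - (1 - u) ^ n) * ((n : ℝ) + 1) ^ (-s)
      ≤ ∑ n ∈ range N, (1 - (1 - u) ^ n) / (n * (n + 1)) := sum_le_sum fun n _ => hterm n
    _ ≤ (1 - (1 - u)) * -log (1 - (1 - u)) / (1 - u) :=
        sum_range_one_sub_pow_div_le (by linarith) (by linarith) N
    _ = negMulLog u / (1 - u) := by rw [sub_sub_cancel, negMulLog]; ring

/-- If `(1 - z) ∑ (n+1)^{-s} < 1`, the term `n = 0` of the right-hand side suffices. Otherwise
`z / (1 - z) ≤ z ∑ (n+1)^{-s}`, which beats the deficit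
`∑ (1 - (1-u)^n) (n+1)^{-s} ≤ negMulLog u / (1 - u)` of `u = z^m`. -/
lemma one_sub_mul_tsum_lt_tsum_pow_mul {s z : ℝ} {m : ℕ} (hs : 2 ≤ s) (hm : 2 ≤ m)
    (hz0 : 0 < z) (hz1 : z < 1) :
    (1 - z) * ∑' n : ℕ, ((n : ℝ) + 1) ^ (-s) <
      ∑' n : ℕ, (1 - z ^ m) ^ n * ((n : ℝ) + 1) ^ (-s) := by
  set u := z ^ m
  have hu0 : 0 < u := pow_pos hz0 m
  have huz : u ≤ z := pow_le_of_le_one hz0.le hz1.le (by omega)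
  have hsumA := summable_one_add_rpow_neg (s := s) (by linarith)
  have hsumS : Summable fun n : ℕ => (1 - u) ^ n * ((n : ℝ) + 1) ^ (-s) :=
    hsumA.of_nonneg_of_le (fun n => mul_nonneg (pow_nonneg (by linarith) n) (by positivity))
      fun n => mul_le_of_le_one_left (by positivity) (pow_le_one₀ (by linarith) (by linarith))
  set A := ∑' n : ℕ, ((n : ℝ) + 1) ^ (-s)
  set S := ∑' n : ℕ, (1 - u) ^ n * ((n : ℝ) + 1) ^ (-s)
  have hS : 1 ≤ S := by
    simpa using hsumS.le_tsum 0 fun n _ => mul_nonneg (pow_nonneg (by linarith) n) (by positivity)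
  have hdeficit : A - S ≤ negMulLog u / (1 - u) := by
    calc A - S = ∑' n : ℕ, (1 - (1 - u) ^ n) * ((n : ℝ) + 1) ^ (-s) := by
          rw [← hsumA.tsum_sub hsumS]
          exact tsum_congr fun n => by ring
      _ ≤ negMulLog u / (1 - u) :=
          tsum_one_sub_pow_mul_rpow_neg_le hs hu0 (huz.trans_lt hz1)
  rcases lt_or_ge ((1 - z) * A) 1 with hA | hA
  · linarith
  · have h1z : 0 < 1 - z := by linarith
    have hA' : z / (1 - z) ≤ z * A := by
      rw [div_le_iff₀ h1z]
      nlinarith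
    have hlog : negMulLog u / (1 - u) < z / (1 - z) := by
      calc negMulLog u / (1 - u) < z / (1 - u) :=
            div_lt_div_of_pos_right (negMulLog_pow_lt hm hz0 hz1) (by linarith)
        _ ≤ z / (1 - z) := by gcongr
    linarith

lemma continuousOn_powerLawD {α : ℝ} (hα : 1 < α) :
    ContinuousOn (powerLawD α) (Icc (-1) 1) := by
  refine continuousOn_const.mul (continuousOn_tsum (fun n => by fun_prop)
    (summable_one_add_rpow_neg hα) fun n y hy => ?_)
  have hy1 : |y| ≤ 1 := abs_le.2 hy
  rw [norm_div, norm_pow, Real.norm_eq_abs, Real.norm_of_nonneg (by positivity),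
    rpow_neg (by positivity), ← one_div]
  gcongr
  exact pow_le_one₀ (abs_nonneg y) hy1

lemma hasDerivAt_powerLawD {α w : ℝ} (hα : 2 < α) (hw : |w| < 1) :
    HasDerivAt (powerLawD α)
      ((zetaReal α)⁻¹ * ∑' n : ℕ, w ^ n * ((n : ℝ) + 1) ^ (-(α - 1))) w := by
  have hcoeff (n : ℕ) : ((n : ℝ) + 1) / ((n : ℝ) + 1) ^ α = ((n : ℝ) + 1) ^ (-(α - 1)) := by
    rw [neg_sub, rpow_sub (by positivity), rpow_one]
  have hseries := hasDerivAt_tsum_of_isPreconnected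
    (g := fun (n : ℕ) (y : ℝ) => y ^ (n + 1) / ((n : ℝ) + 1) ^ α)
    (g' := fun (n : ℕ) (y : ℝ) => y ^ n * ((n : ℝ) + 1) ^ (-(α - 1)))
    (summable_one_add_rpow_neg (s := α - 1) (by linarith)) isOpen_Ioo isPreconnected_Ioo
    (fun n y _ => ?_) (fun n y hy => ?_) (y₀ := 0) (by norm_num) (by simp) (abs_lt.1 hw)
  · exact hseries.const_mul _
  · refine ((hasDerivAt_pow (n + 1) y).div_const (((n : ℝ) + 1) ^ α)).congr_deriv ?_
    rw [← hcoeff]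
    push_cast
    ring
  · have hy1 : |y| ≤ 1 := abs_le.2 ⟨hy.1.le, hy.2.le⟩
    rw [norm_mul, norm_pow, Real.norm_eq_abs, Real.norm_of_nonneg (by positivity)]
    exact mul_le_of_le_one_left (by positivity) (pow_le_one₀ (abs_nonneg y) hy1)

lemma continuousOn_powerLawPhi {α : ℝ} (hα : 1 < α) (k : ℕ) :
    ContinuousOn (powerLawPhi α k) (Icc 0 1) := by
  have hmaps : MapsTo (fun z : ℝ => 1 - z ^ (k - 1)) (Icc 0 1) (Icc (-1) 1) := fun z hz => by
    have := pow_nonneg hz.1 (k - 1)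
    have := pow_le_one₀ hz.1 hz.2 (n := k - 1)
    constructor <;> linarith
  exact ((continuousOn_powerLawD hα).comp (by fun_prop) hmaps).sub (by fun_prop)

noncomputable def powerLawPhiDeriv (α : ℝ) (k : ℕ) (x : ℝ) : ℝ :=
  ((k : ℝ) - 1) * x ^ (k - 2) / zetaReal α *
    ((1 - x) * zetaReal (α - 1) -
      ∑' n : ℕ, (1 - x ^ (k - 1)) ^ n * ((n : ℝ) + 1) ^ (-(α - 1)))

lemma hasDerivAt_powerLawPhi {α x : ℝ} {k : ℕ} (hα : 2 < α) (hk : 2 ≤ k)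
    (hx0 : 0 < x) (hx1 : x < 1) :
    HasDerivAt (powerLawPhi α k) (powerLawPhiDeriv α k x) x := by
  obtain ⟨j, rfl⟩ : ∃ j, k = j + 2 := ⟨k - 2, by omega⟩
  have hw : |1 - x ^ (j + 1)| < 1 := by
    have := pow_pos hx0 (j + 1)
    have := pow_lt_one₀ hx0.le hx1 (n := j + 1) (by omega)
    rw [abs_lt]; constructor <;> linarith
  have hD := (hasDerivAt_powerLawD hα hw).comp x ((hasDerivAt_pow (j + 1) x).const_sub 1)
  have hpoly := (((hasDerivAt_pow (j + 1) x).const_mul ((j + 2 : ℕ) : ℝ)).const_sub 1).add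
    ((hasDerivAt_pow (j + 2) x).const_mul (((j + 2 : ℕ) : ℝ) - 1))
  refine (hD.sub (hpoly.const_mul
    (zetaReal (α - 1) / (zetaReal α * ((j + 2 : ℕ) : ℝ))))).congr_deriv ?_
  simp only [powerLawPhiDeriv, Nat.add_sub_cancel, show j + 2 - 1 = j + 1 by omega]
  push_cast
  field_simp
  ring

lemma powerLawPhiDeriv_neg {α x : ℝ} {k : ℕ} (hα : 3 ≤ α) (hk : 3 ≤ k)
    (hx0 : 0 < x) (hx1 : x < 1) : powerLawPhiDeriv α k x < 0 := by
  have hk1 : (0 : ℝ) < (k : ℝ) - 1 := by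
    have : (3 : ℝ) ≤ k := by exact_mod_cast hk
    linarith
  have hζ := zetaReal_pos (s := α) (by linarith)
  refine mul_neg_of_pos_of_neg (by positivity) (sub_neg.2 ?_)
  exact one_sub_mul_tsum_lt_tsum_pow_mul (by linarith) (by omega) hx0 hx1

/-- For `α > 3` and `k ≥ 3`, the function `Φ` of the power-law
example is strictly decreasing on `[0,1]`; in particular `Φ(z) < Φ(0)` for all
`0 < z ≤ 1`. -/
theorem stmt16 (α : ℝ) (hα : 3 < α) (k : ℕ) (hk : 3 ≤ k) :
    StrictAntiOn (powerLawPhi α k) (Set.Icc 0 1) ∧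
      ∀ z : ℝ, 0 < z → z ≤ 1 → powerLawPhi α k z < powerLawPhi α k 0 := by
  have hanti : StrictAntiOn (powerLawPhi α k) (Icc 0 1) := by
    refine strictAntiOn_of_hasDerivWithinAt_neg (convex_Icc 0 1)
      (continuousOn_powerLawPhi (by linarith) k) (f' := powerLawPhiDeriv α k)
      (fun x hx => ?_) (fun x hx => ?_) <;> rw [interior_Icc] at hx
    · exact (hasDerivAt_powerLawPhi (by linarith) (by omega) hx.1 hx.2).hasDerivWithinAt
    · exact powerLawPhiDeriv_neg hα.le hk hx.1 hx.2
  exact ⟨hanti, fun z hz0 hz1 => hanti (left_mem_Icc.2 zero_le_one) ⟨hz0.le, hz1⟩ hz0⟩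
end
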